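/- Let X be a Polish space, (Ξ, 𝒜, ℙ) a complete probability space with countable product (Ξ^∞, 𝒜^∞, ℙ^∞), M : Ξ ⇉ X a measurable set-valued map with closed values, g : X → ℝ ∪ {+∞} lower semicontinuous, and g_n : X → ℝ ∪ {+∞} a sequence of lower semicontinuous functions converging continuously to g. For ω = (ξ_k)_{k≥1} set S_n(ω) := ⋂_{k=1}^n M(ξ_k) and M_as := {x ∈ X : x ∈ M(ξ) for ℙ-a.e. ξ}. Assume the robust problem min{g(x) : x ∈ M_as} is feasible (there exists x ∈ M_as with g(x) < +∞) and that, for ℙ^∞-a.e. ω, the sequence g_n is eventually level-compact on S_n(ω). Then for ℙ^∞-a.e. ω ∈ Ξ^∞: ⋂_{ε>0} liminf_n (ε-argmin_{S_n(ω)} g_n) = argmin_{M_as} g = ⋂_{ε>0} limsup_n (ε-argmin_{S_n(ω)} g_n), where liminf_n and limsup_n denote the Painlevé–Kuratowski inner and outer limits of sets. -/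

import Mathlib

open Filter Topology MeasureTheory Set

noncomputable section

/-- Epi-convergence of a sequence of extended-real-valued functions on a metric space:
for every `x`, (a) `liminf f n (u n) ≥ g x` along every sequence `u → x`, and
(b) `limsup f n (u n) ≤ g x` along some sequence `u → x`. -/
def EpiConv {X : Type*} [MetricSpace X] (f : ℕ → X → EReal) (g : X → EReal) : Prop :=
  ∀ x : X,
    (∀ u : ℕ → X, Tendsto u atTop (𝓝 x) → g x ≤ atTop.liminf fun n => f n (u n)) ∧
    (∃ u : ℕ → X, Tendsto u atTop (𝓝 x) ∧ (atTop.limsup fun n => f n (u n)) ≤ g x)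

/-- Continuous convergence: `f n (u n) → g x` for every `x` and every sequence `u → x`. -/
def ContConv {X : Type*} [MetricSpace X] (f : ℕ → X → EReal) (g : X → EReal) : Prop :=
  ∀ x : X, ∀ u : ℕ → X, Tendsto u atTop (𝓝 x) →
    Tendsto (fun n => f n (u n)) atTop (𝓝 (g x))

/-- Infimal value of `h` on `C`. -/
def vOn {X : Type*} (h : X → EReal) (C : Set X) : EReal := ⨅ x ∈ C, h x

open Classical in
/-- ε-infimal value of `h` on `C`: `inf_C h + ε` if `inf_C h > -∞`, and `-1/ε` otherwise
(with the convention `1/0 = +∞`, so `-1/0 = -∞`). -/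
def vEpsOn {X : Type*} (h : X → EReal) (C : Set X) (ε : ℝ) : EReal :=
  if vOn h C = ⊥ then (if ε = 0 then ⊥ else ((-ε⁻¹ : ℝ) : EReal))
  else vOn h C + (ε : EReal)

/-- ε-argmin of `h` on `C`: the points of `C` where `h` is below the ε-infimal value. -/
def argminOn {X : Type*} (h : X → EReal) (C : Set X) (ε : ℝ) : Set X :=
  {x ∈ C | h x ≤ vEpsOn h C ε}

/-- Painlevé–Kuratowski outer limit: points whose distance to `S n` has liminf 0. -/
def outerLim {X : Type*} [MetricSpace X] (S : ℕ → Set X) : Set X :=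
  {x | atTop.liminf (fun n => EMetric.infEdist x (S n)) = 0}

/-- Painlevé–Kuratowski inner limit: points whose distance to `S n` has limsup 0. -/
def innerLim {X : Type*} [MetricSpace X] (S : ℕ → Set X) : Set X :=
  {x | atTop.limsup (fun n => EMetric.infEdist x (S n)) = 0}

open Classical in
/-- Indicator function `δ_A`: `0` on `A`, `+∞` off `A`. -/
def delta {X : Type*} (A : Set X) : X → EReal := fun x => if x ∈ A then 0 else ⊤

/-- The sequence `g n` is eventually level-compact on the sets `C n`: for every level `α`
there is `N` such that the union over `n ≥ N` of the `α`-sublevel sets of `g n` on `C n`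
is relatively compact. -/
def EvLevelCompact {X : Type*} [MetricSpace X] (g : ℕ → X → EReal) (C : ℕ → Set X) : Prop :=
  ∀ α : ℝ, ∃ N : ℕ, IsCompact (closure (⋃ n ∈ Ici N, {x ∈ C n | g n x ≤ (α : EReal)}))

/-- Measurability of a set-valued map: preimages of open sets are measurable. -/
def MeasurableMultifun {Ξ X : Type*} [MeasurableSpace Ξ] [TopologicalSpace X]
    (M : Ξ → Set X) : Prop :=
  ∀ U : Set X, IsOpen U → MeasurableSet {ξ | (M ξ ∩ U).Nonempty}

/-- `P` is the countable product `ℙ^∞` of the probability measure `ℙ`: every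
finite-dimensional cylinder has product measure. -/
def IsProductMeasure {Ξ : Type*} [MeasurableSpace Ξ] (P : Measure (ℕ → Ξ))
    (ℙ : Measure Ξ) : Prop :=
  ∀ (s : Finset ℕ) (A : ℕ → Set Ξ), (∀ i, MeasurableSet (A i)) →
    P {ω | ∀ i ∈ s, ω i ∈ A i} = ∏ i ∈ s, ℙ (A i)

/-- Moreau envelope `e_λ g`. -/
def moreau {d : ℕ} (g : EuclideanSpace ℝ (Fin d) → EReal) (lam : ℝ)
    (x : EuclideanSpace ℝ (Fin d)) : EReal :=
  ⨅ u, g u + ((‖x - u‖ ^ 2 / (2 * lam) : ℝ) : EReal)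


/-! Almost surely the sampled constraint sets `S_n(ω)` decrease to the almost-sure set `M_as`:
a separable `M_as` lies in almost every closed `M ξ`, and a point outside `M_as` has a basic
neighbourhood that `M ξ` misses with positive probability, which some sample eventually does.
Everything is then deterministic. For decreasing closed `C n` with intersection `D`, continuous
convergence gives `limsup inf_{C n} g n ≤ inf_D g`, and level-compactness gives the reverse
bound for `liminf` (and rules out `inf_D g = -∞`), since cluster points of near-minimizers lie in
`D`. So the `ε`-infimal values converge to `inf_D g + ε`, and both set limits of the
`ε`-argmins, intersected over `ε > 0`, are squeezed onto `argmin_D g`. -/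

namespace IsProductMeasure

variable {Ξ : Type*} [MeasurableSpace Ξ] {P : Measure (ℕ → Ξ)} {ℙ : Measure Ξ}

lemma measure_coord_mem (hP : IsProductMeasure P ℙ) (k : ℕ) {A : Set Ξ}
    (hA : MeasurableSet A) : P {ω | ω k ∈ A} = ℙ A := by
  simpa using hP {k} (fun _ => A) fun _ => hA

lemma ae_forall_coord (hP : IsProductMeasure P ℙ) {p : Ξ → Prop} (h : ∀ᵐ ζ ∂ℙ, p ζ) :
    ∀ᵐ ω ∂P, ∀ k, p (ω k) := by
  refine ae_all_iff.2 fun k => ?_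
  rw [ae_iff] at h ⊢
  refine measure_mono_null (t := {ω | ω k ∈ toMeasurable ℙ {ζ | ¬p ζ}})
    (fun ω hω => subset_toMeasurable ℙ _ hω) ?_
  rw [hP.measure_coord_mem k (measurableSet_toMeasurable ℙ _), measure_toMeasurable, h]

lemma ae_exists_coord_mem [IsProbabilityMeasure ℙ] (hP : IsProductMeasure P ℙ) {A : Set Ξ}
    (hA : MeasurableSet A) (hA0 : ℙ A ≠ 0) : ∀ᵐ ω ∂P, ∃ k, ω k ∈ A := by
  have hq : ℙ Aᶜ < 1 := by
    rw [prob_compl_eq_one_sub hA]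
    exact ENNReal.sub_lt_self ENNReal.one_ne_top one_ne_zero hA0
  have hbound (m : ℕ) : P {ω | ¬∃ k, ω k ∈ A} ≤ ℙ Aᶜ ^ m := calc
    P {ω | ¬∃ k, ω k ∈ A} ≤ P {ω | ∀ k ∈ Finset.range m, ω k ∈ Aᶜ} :=
      measure_mono fun ω hω k _ hk => hω ⟨k, hk⟩
    _ = ℙ Aᶜ ^ m := by
      rw [hP _ _ fun _ => hA.compl, Finset.prod_const, Finset.card_range]
  rw [ae_iff]
  exact le_zero_iff.1
    (ge_of_tendsto' (ENNReal.tendsto_pow_atTop_nhds_zero_of_lt_one hq) hbound)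

end IsProductMeasure

section AlmostSureConstraints

open TopologicalSpace

variable {Ξ X : Type*} [MeasurableSpace Ξ] [TopologicalSpace X] {M : Ξ → Set X}

lemma ae_subset_of_isSeparable [PseudoMetrizableSpace X] {ℙ : Measure Ξ}
    (hM : ∀ ξ, IsClosed (M ξ)) {s : Set X} (hs : IsSeparable s)
    (h : ∀ x ∈ s, ∀ᵐ ξ ∂ℙ, x ∈ M ξ) : ∀ᵐ ξ ∂ℙ, s ⊆ M ξ := by
  obtain ⟨t, hts, htc, hst⟩ := hs.exists_countable_dense_subset
  filter_upwards [(ae_ball_iff htc).2 fun x hx => h x (hts hx)] with ξ hξ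
  exact hst.trans (closure_minimal hξ (hM ξ))

lemma ae_iInter_subset_setOf_ae_mem [SecondCountableTopology X] {ℙ : Measure Ξ}
    [IsProbabilityMeasure ℙ] {P : Measure (ℕ → Ξ)} (hP : IsProductMeasure P ℙ)
    (hM : ∀ ξ, IsClosed (M ξ)) (hM_meas : MeasurableMultifun M) :
    ∀ᵐ ω ∂P, ⋂ k, M (ω k) ⊆ {x | ∀ᵐ ξ ∂ℙ, x ∈ M ξ} := by
  have hmiss : ∀ᵐ ω ∂P, ∀ U ∈ countableBasis X, ℙ {ξ | ¬(M ξ ∩ U).Nonempty} ≠ 0 →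
      ∃ k, ¬(M (ω k) ∩ U).Nonempty := by
    refine (ae_ball_iff (countable_countableBasis X)).2 fun U hU => ?_
    by_cases h0 : ℙ {ξ | ¬(M ξ ∩ U).Nonempty} = 0
    · exact .of_forall fun _ h => absurd h0 h
    · have hA := (hM_meas U (isOpen_of_mem_countableBasis hU)).compl
      exact (hP.ae_exists_coord_mem hA h0).mono fun _ h _ => h
  filter_upwards [hmiss] with ω hω x hx
  have hcover : {ξ | x ∉ M ξ} ⊆
      ⋃ U ∈ {U ∈ countableBasis X | x ∈ U}, {ξ | ¬(M ξ ∩ U).Nonempty} := by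
    intro ξ (hξ : x ∉ M ξ)
    rw [← (hM ξ).closure_eq, (isBasis_countableBasis X).mem_closure_iff] at hξ
    simp only [not_forall, exists_prop] at hξ
    obtain ⟨U, hU, hxU, hUM⟩ := hξ
    exact mem_biUnion ⟨hU, hxU⟩ fun h => hUM (inter_comm U (M ξ) ▸ h)
  change ∀ᵐ ξ ∂ℙ, x ∈ M ξ
  rw [ae_iff]
  refine measure_mono_null hcover ((measure_biUnion_null_iff
    ((countable_countableBasis X).mono (sep_subset _ _))).2 fun U ⟨hU, hxU⟩ => ?_)
  by_contra h0
  obtain ⟨k, hk⟩ := hω U hU h0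
  exact hk ⟨x, mem_iInter.1 hx k, hxU⟩

theorem ae_iInter_eq_setOf_ae_mem [PseudoMetrizableSpace X]
    [SecondCountableTopology X] {ℙ : Measure Ξ} [IsProbabilityMeasure ℙ]
    {P : Measure (ℕ → Ξ)} (hP : IsProductMeasure P ℙ) (hM : ∀ ξ, IsClosed (M ξ))
    (hM_meas : MeasurableMultifun M) :
    ∀ᵐ ω ∂P, ⋂ k, M (ω k) = {x | ∀ᵐ ξ ∂ℙ, x ∈ M ξ} := by
  filter_upwards [hP.ae_forall_coord (ae_subset_of_isSeparable hM (.of_separableSpace _)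
      fun _ hx => hx), ae_iInter_subset_setOf_ae_mem hP hM hM_meas] with ω hsub hsup
  exact hsup.antisymm (subset_iInter hsub)

end AlmostSureConstraints

lemma iInter_biInter_range {α : Type*} (s : ℕ → Set α) :
    ⋂ n, ⋂ k ∈ Finset.range n, s k = ⋂ k, s k := by
  refine (subset_iInter fun k => ?_).antisymm (subset_iInter fun n => ?_)
  · exact (iInter_subset _ (k + 1)).trans
      (biInter_subset_of_mem (Finset.mem_range_succ_iff.2 le_rfl))
  · exact subset_iInter₂ fun k _ => iInter_subset s k

lemma antitone_biInter_range {α : Type*} (s : ℕ → Set α) :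
    Antitone fun n => ⋂ k ∈ Finset.range n, s k := fun _ _ hmn =>
  biInter_subset_biInter_left fun _ hk => Finset.range_mono hmn hk

section ExtendedValues

variable {X : Type*} {h : X → EReal} {C : Set X}

lemma vOn_le_of_mem {x : X} (hx : x ∈ C) : vOn h C ≤ h x := iInf₂_le x hx

lemma exists_lt_of_vOn_lt {a : EReal} (hv : vOn h C < a) : ∃ x ∈ C, h x < a := by
  simpa only [vOn, iInf_lt_iff, exists_prop] using hv

lemma vEpsOn_of_ne_bot (hv : vOn h C ≠ ⊥) (ε : ℝ) : vEpsOn h C ε = vOn h C + ε := if_neg hv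

lemma tendsto_vEpsOn {h : ℕ → X → EReal} {C : ℕ → Set X} {r : ℝ}
    (hv : Tendsto (fun n => vOn (h n) (C n)) atTop (𝓝 (r : EReal))) (ε : ℝ) :
    Tendsto (fun n => vEpsOn (h n) (C n) ε) atTop (𝓝 ((r + ε : ℝ) : EReal)) := by
  have hadd : Tendsto (fun n => vOn (h n) (C n) + ε) atTop (𝓝 ((r + ε : ℝ) : EReal)) :=
    (EReal.continuousAt_add_coe_coe r ε).tendsto.comp (hv.prodMk_nhds tendsto_const_nhds)
  refine hadd.congr' ?_
  filter_upwards [hv.eventually_ne (EReal.coe_ne_bot r)] with n hn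
  rw [vEpsOn_of_ne_bot hn]

end ExtendedValues

section SetLimits

variable {X : Type*} [MetricSpace X] {S : ℕ → Set X} {x : X}

lemma mem_innerLim_of_eventually_mem (h : ∀ᶠ n in atTop, x ∈ S n) : x ∈ innerLim S := by
  have h0 : ∀ᶠ n in atTop, Metric.infEDist x (S n) = 0 :=
    h.mono fun _ hn => Metric.infEDist_zero_of_mem hn
  exact (limsup_congr h0).trans (limsup_const 0)

lemma innerLim_subset_outerLim (S : ℕ → Set X) : innerLim S ⊆ outerLim S :=
  fun _ hx => le_antisymm (hx ▸ liminf_le_limsup) zero_le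

lemma exists_seq_tendsto_of_mem_outerLim (hx : x ∈ outerLim S) :
    ∃ φ : ℕ → ℕ, StrictMono φ ∧ ∃ y : ℕ → X, (∀ j, y j ∈ S (φ j)) ∧ Tendsto y atTop (𝓝 x) := by
  have hfreq (j : ℕ) : ∃ᶠ n in atTop, ∃ y ∈ S n, edist x y < ((j : ENNReal) + 1)⁻¹ :=
    (frequently_lt_of_liminf_lt (by isBoundedDefault) (hx.symm ▸ ENNReal.inv_pos.2 (by simp))).mono
      fun _ hn => Metric.infEDist_lt_iff.1 hn
  obtain ⟨φ, hφ, hy⟩ := extraction_forall_of_frequently hfreq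
  choose y hyS hyx using hy
  refine ⟨φ, hφ, y, hyS, tendsto_iff_edist_tendsto_0.2 ?_⟩
  refine tendsto_of_tendsto_of_tendsto_of_le_of_le tendsto_const_nhds
    (ENNReal.tendsto_inv_nat_nhds_zero.comp (tendsto_add_atTop_nat 1)) (fun _ => zero_le)
    fun j => ?_
  rw [edist_comm]
  simpa using (hyx j).le

end SetLimits

section Deterministic

variable {X : Type*} [MetricSpace X] {gn : ℕ → X → EReal} {g : X → EReal} {C : ℕ → Set X}

lemma ContConv.tendsto_comp_strictMono (hcc : ContConv gn g) {φ : ℕ → ℕ} (hφ : StrictMono φ)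
    {y : ℕ → X} {x : X} (hy : Tendsto y atTop (𝓝 x)) :
    Tendsto (fun j => gn (φ j) (y j)) atTop (𝓝 (g x)) := by
  classical
  -- `J` is a left inverse of `φ` tending to infinity, so `y ∘ J` is a full sequence tending to `x`.
  let J (n : ℕ) : ℕ := Nat.findGreatest (fun j => φ j ≤ n) n
  have hle (j n : ℕ) (h : φ j ≤ n) : j ≤ J n := Nat.le_findGreatest (hφ.le_apply.trans h) h
  have hJφ (j : ℕ) : J (φ j) = j :=
    le_antisymm (hφ.le_iff_le.1 (Nat.findGreatest_spec (P := fun i => φ i ≤ φ j) hφ.le_apply le_rfl))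
      (hle j _ le_rfl)
  have hJ : Tendsto J atTop atTop := tendsto_atTop_atTop.2 fun j => ⟨φ j, hle j⟩
  simpa only [Function.comp_def, hJφ] using (hcc x _ (hy.comp hJ)).comp hφ.tendsto_atTop

lemma mem_iInter_of_tendsto (hC : ∀ n, IsClosed (C n)) (hanti : Antitone C) {φ : ℕ → ℕ}
    (hφ : Tendsto φ atTop atTop) {y : ℕ → X} (hy : ∀ j, y j ∈ C (φ j)) {x : X}
    (hyx : Tendsto y atTop (𝓝 x)) : x ∈ ⋂ n, C n :=
  mem_iInter.2 fun m => (hC m).mem_of_tendsto hyx <|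
    (hφ.eventually_ge_atTop m).mono fun j hj => hanti hj (hy j)

lemma limsup_vOn_le (hcc : ContConv gn g) :
    limsup (fun n => vOn (gn n) (C n)) atTop ≤ vOn g (⋂ n, C n) :=
  le_iInf₂ fun x hx => calc
    limsup (fun n => vOn (gn n) (C n)) atTop ≤ limsup (fun n => gn n x) atTop :=
      limsup_le_limsup (.of_forall fun n => vOn_le_of_mem (mem_iInter.1 hx n))
    _ = g x := (hcc x _ tendsto_const_nhds).limsup_eq

lemma subset_biInter_innerLim_argminOn (hcc : ContConv gn g) {r : ℝ}
    (hv : ∀ ε, Tendsto (fun n => vEpsOn (gn n) (C n) ε) atTop (𝓝 ((r + ε : ℝ) : EReal))) :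
    {x ∈ ⋂ n, C n | g x ≤ r} ⊆ ⋂ ε ∈ Ioi (0 : ℝ), innerLim fun n => argminOn (gn n) (C n) ε := by
  rintro x ⟨hxC, hxr⟩
  refine mem_iInter₂.2 fun ε (hε : 0 < ε) => mem_innerLim_of_eventually_mem ?_
  have hlt : g x < ((r + ε : ℝ) : EReal) :=
    hxr.trans_lt (EReal.coe_lt_coe_iff.2 (lt_add_of_pos_right r hε))
  filter_upwards [(hcc x _ tendsto_const_nhds).eventually_lt (hv ε) hlt] with n hn
  exact ⟨mem_iInter.1 hxC n, hn.le⟩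

lemma biInter_outerLim_argminOn_subset (hC : ∀ n, IsClosed (C n)) (hanti : Antitone C)
    (hcc : ContConv gn g) {r : ℝ}
    (hv : ∀ ε, Tendsto (fun n => vEpsOn (gn n) (C n) ε) atTop (𝓝 ((r + ε : ℝ) : EReal))) :
    ⋂ ε ∈ Ioi (0 : ℝ), outerLim (fun n => argminOn (gn n) (C n) ε) ⊆ {x ∈ ⋂ n, C n | g x ≤ r} := by
  intro x hx
  have hε (ε : ℝ) (hε : 0 < ε) : x ∈ ⋂ n, C n ∧ g x ≤ ((r + ε : ℝ) : EReal) := by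
    obtain ⟨φ, hφ, y, hyA, hyx⟩ := exists_seq_tendsto_of_mem_outerLim (mem_iInter₂.1 hx ε hε)
    exact ⟨mem_iInter_of_tendsto hC hanti hφ.tendsto_atTop (fun j => (hyA j).1) hyx,
      le_of_tendsto_of_tendsto' (hcc.tendsto_comp_strictMono hφ hyx)
        ((hv ε).comp hφ.tendsto_atTop) fun j => (hyA j).2⟩
  refine ⟨(hε 1 one_pos).1, EReal.le_of_forall_lt_iff_le.1 fun z hz => ?_⟩
  simpa using (hε (z - r) (sub_pos.2 (EReal.coe_lt_coe_iff.1 hz))).2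

variable (hC : ∀ n, IsClosed (C n)) (hanti : Antitone C) (hcc : ContConv gn g)
  (hlc : EvLevelCompact gn C)
include hC hanti hcc hlc

lemma exists_mem_iInter_subseq_tendsto_of_le {φ : ℕ → ℕ} (hφ : StrictMono φ) {y : ℕ → X}
    (hy : ∀ j, y j ∈ C (φ j)) {α : ℝ} (hα : ∀ j, gn (φ j) (y j) ≤ α) :
    ∃ x ∈ ⋂ n, C n, ∃ ψ : ℕ → ℕ, StrictMono ψ ∧
      Tendsto (fun j => gn (φ (ψ j)) (y (ψ j))) atTop (𝓝 (g x)) := by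
  obtain ⟨N, hK⟩ := hlc α
  have hyK (j : ℕ) : y (j + N) ∈ closure (⋃ n ∈ Ici N, {x ∈ C n | gn n x ≤ α}) :=
    subset_closure <| mem_iUnion₂.2
      ⟨φ (j + N), (Nat.le_add_left N j).trans hφ.le_apply, hy _, hα _⟩
  obtain ⟨x, -, ψ, hψ, hyx⟩ := hK.tendsto_subseq hyK
  have hψN : StrictMono fun j => ψ j + N := fun _ _ h => Nat.add_lt_add_right (hψ h) N
  exact ⟨x, mem_iInter_of_tendsto hC hanti (hφ.comp hψN).tendsto_atTop (fun _ => hy _) hyx,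
    _, hψN, hcc.tendsto_comp_strictMono (hφ.comp hψN) hyx⟩

lemma vOn_le_liminf : vOn g (⋂ n, C n) ≤ liminf (fun n => vOn (gn n) (C n)) atTop := by
  by_contra! h
  obtain ⟨c, hc, hcv⟩ := EReal.exists_between_coe_real h
  have hfreq : ∃ᶠ n in atTop, ∃ x ∈ C n, gn n x < c :=
    (frequently_lt_of_liminf_lt (by isBoundedDefault) hc).mono fun _ => exists_lt_of_vOn_lt
  obtain ⟨φ, hφ, hex⟩ := extraction_of_frequently_atTop hfreq
  choose y hyC hyc using hex
  obtain ⟨x, hxD, ψ, -, hlim⟩ :=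
    exists_mem_iInter_subseq_tendsto_of_le hC hanti hcc hlc hφ hyC fun j => (hyc j).le
  exact hcv.not_ge ((vOn_le_of_mem hxD).trans (le_of_tendsto' hlim fun j => (hyc _).le))

lemma vOn_iInter_ne_bot (hg : ∀ x, g x ≠ ⊥) : vOn g (⋂ n, C n) ≠ ⊥ := by
  intro hbot
  have hfreq (k : ℕ) : ∃ᶠ n in atTop, ∃ x ∈ C n, gn n x < (-k : ℝ) :=
    (eventually_lt_of_limsup_lt ((limsup_vOn_le hcc).trans_lt
      (hbot ▸ EReal.bot_lt_coe _))).frequently.mono fun _ => exists_lt_of_vOn_lt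
  obtain ⟨φ, hφ, hex⟩ := extraction_forall_of_frequently hfreq
  choose y hyC hyk using hex
  have hy0 (j : ℕ) : gn (φ j) (y j) ≤ (0 : ℝ) :=
    (hyk j).le.trans (EReal.coe_le_coe_iff.2 (neg_nonpos.2 j.cast_nonneg))
  obtain ⟨x, -, ψ, hψ, hlim⟩ := exists_mem_iInter_subseq_tendsto_of_le hC hanti hcc hlc hφ hyC hy0
  have hbound : Tendsto (fun j => ((-(ψ j : ℝ) : ℝ) : EReal)) atTop (𝓝 ⊥) :=
    EReal.tendsto_coe_atBot.comp <| tendsto_neg_atTop_atBot.comp <|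
      tendsto_natCast_atTop_atTop.comp hψ.tendsto_atTop
  exact hg x (le_bot_iff.1 (le_of_tendsto_of_tendsto' hlim hbound fun j => (hyk (ψ j)).le))

lemma tendsto_vOn :
    Tendsto (fun n => vOn (gn n) (C n)) atTop (𝓝 (vOn g (⋂ n, C n))) :=
  tendsto_of_le_liminf_of_limsup_le (vOn_le_liminf hC hanti hcc hlc) (limsup_vOn_le hcc)

theorem argminOn_iInter_eq_biInter_innerLim_and_outerLim (hg : ∀ x, g x ≠ ⊥)
    (hfeas : ∃ x ∈ ⋂ n, C n, g x < ⊤) :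
    (⋂ ε ∈ Ioi (0 : ℝ), innerLim fun n => argminOn (gn n) (C n) ε) = argminOn g (⋂ n, C n) 0 ∧
      argminOn g (⋂ n, C n) 0 =
        ⋂ ε ∈ Ioi (0 : ℝ), outerLim fun n => argminOn (gn n) (C n) ε := by
  obtain ⟨x₀, hx₀, hx₀_top⟩ := hfeas
  have hv := tendsto_vOn hC hanti hcc hlc
  have hbot := vOn_iInter_ne_bot hC hanti hcc hlc hg
  have hargmin : argminOn g (⋂ n, C n) 0 = {x ∈ ⋂ n, C n | g x ≤ vOn g (⋂ n, C n)} := by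
    simp only [argminOn, vEpsOn_of_ne_bot hbot, EReal.coe_zero, add_zero]
  lift vOn g (⋂ n, C n) to ℝ using ⟨((vOn_le_of_mem hx₀).trans_lt hx₀_top).ne, hbot⟩ with r
  have hinner := subset_biInter_innerLim_argminOn hcc (tendsto_vEpsOn hv)
  have houter := biInter_outerLim_argminOn_subset hC hanti hcc (tendsto_vEpsOn hv)
  have hio := iInter₂_mono fun ε (_ : ε ∈ Ioi (0 : ℝ)) =>
    innerLim_subset_outerLim fun n => argminOn (gn n) (C n) ε
  rw [hargmin]
  exact ⟨(hio.trans houter).antisymm hinner, (hinner.trans hio).antisymm houter⟩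

end Deterministic

theorem scenario_argmin_characterization_general {X : Type*} [MetricSpace X] [PolishSpace X]
    {Ξ : Type*} [MeasurableSpace Ξ] (ℙ : Measure Ξ) [IsProbabilityMeasure ℙ]
    (P : Measure (ℕ → Ξ)) (hP : IsProductMeasure P ℙ)
    (M : Ξ → Set X) (hM_closed : ∀ ξ, IsClosed (M ξ)) (hM_meas : MeasurableMultifun M)
    (g : X → EReal) (gn : ℕ → X → EReal)
    (hg_noBot : ∀ x, g x ≠ ⊥)
    (hcc : ContConv gn g)
    (hfeas : ∃ x ∈ {y : X | ∀ᵐ ζ ∂ℙ, y ∈ M ζ}, g x < ⊤)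
    (hlc : ∀ᵐ ω ∂P, EvLevelCompact gn (fun n => ⋂ k ∈ Finset.range n, M (ω k))) :
    ∀ᵐ ω ∂P,
      (⋂ ε ∈ Ioi (0 : ℝ), innerLim (fun n =>
          argminOn (gn n) (⋂ k ∈ Finset.range n, M (ω k)) ε)) =
        argminOn g {y : X | ∀ᵐ ζ ∂ℙ, y ∈ M ζ} 0 ∧
      argminOn g {y : X | ∀ᵐ ζ ∂ℙ, y ∈ M ζ} 0 =
        ⋂ ε ∈ Ioi (0 : ℝ), outerLim (fun n =>
          argminOn (gn n) (⋂ k ∈ Finset.range n, M (ω k)) ε) := by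
  filter_upwards [ae_iInter_eq_setOf_ae_mem hP hM_closed hM_meas, hlc] with ω hω hlcω
  rw [← hω, ← iInter_biInter_range] at hfeas ⊢
  exact argminOn_iInter_eq_biInter_innerLim_and_outerLim
    (fun n => isClosed_biInter fun k _ => hM_closed (ω k)) (antitone_biInter_range _) hcc hlcω
    hg_noBot hfeas

/-- scenario approach. Under feasibility and eventual level-compactness,
for `P`-a.e. `ω`:
`⋂_{ε>0} liminf_n (ε-argmin_{S n ω} g n) = argmin_{M_as} g = ⋂_{ε>0} limsup_n (ε-argmin_{S n ω} g n)`. -/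
theorem scenario_argmin_characterization {X : Type*} [MetricSpace X] [PolishSpace X]
    {Ξ : Type*} [MeasurableSpace Ξ] (ℙ : Measure Ξ) [IsProbabilityMeasure ℙ] [ℙ.IsComplete]
    (P : Measure (ℕ → Ξ)) [IsProbabilityMeasure P] (hP : IsProductMeasure P ℙ)
    (M : Ξ → Set X) (hM_closed : ∀ ξ, IsClosed (M ξ)) (hM_meas : MeasurableMultifun M)
    (g : X → EReal) (gn : ℕ → X → EReal)
    (hg_noBot : ∀ x, g x ≠ ⊥) (hgn_noBot : ∀ n x, gn n x ≠ ⊥)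
    (hg_lsc : LowerSemicontinuous g) (hgn_lsc : ∀ n, LowerSemicontinuous (gn n))
    (hcc : ContConv gn g)
    (hfeas : ∃ x ∈ {y : X | ∀ᵐ ζ ∂ℙ, y ∈ M ζ}, g x < ⊤)
    (hlc : ∀ᵐ ω ∂P, EvLevelCompact gn (fun n => ⋂ k ∈ Finset.range n, M (ω k))) :
    ∀ᵐ ω ∂P,
      (⋂ ε ∈ Ioi (0 : ℝ), innerLim (fun n =>
          argminOn (gn n) (⋂ k ∈ Finset.range n, M (ω k)) ε)) =
        argminOn g {y : X | ∀ᵐ ζ ∂ℙ, y ∈ M ζ} 0 ∧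
      argminOn g {y : X | ∀ᵐ ζ ∂ℙ, y ∈ M ζ} 0 =
        ⋂ ε ∈ Ioi (0 : ℝ), outerLim (fun n =>
          argminOn (gn n) (⋂ k ∈ Finset.range n, M (ω k)) ε) :=
  scenario_argmin_characterization_general ℙ P hP M hM_closed hM_meas g gn hg_noBot hcc hfeas hlc
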